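/- arXiv:2404.02312 — 10 statements merged into one kernel-verified Lean document; each statement's English description precedes it below -/
import Mathlib

section
/- Let t1, a1 be real numbers and assume conditions (10): e1 ≠ 0, h1 = (k1²n1² + e1·k1·n1 + k1·n1·t1 + a1² + e1·t1)/e1, s1 = −k1·n1 − t1, p1 = (k1²n1² + k1·n1·t1 + a1²)/e1², w1 = −k1·n1 − e1 + k1. Then (1,1) is an equilibrium of the competitive system Z1, and the Jacobian matrix of Z1 at (1,1) has trace t1 and determinant a1². -/
/-- The competitive resource–consumer system `Z1`. -/
noncomputable def Z1 (k1 n1 e1 p1 s1 w1 h1 : ℝ) (p : ℝ × ℝ) : ℝ × ℝ :=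
  (p.1 * (k1 * (1 - n1 * p.1) - e1 * p.2 - w1),
   p.2 * (e1 * p1 * p.1 - s1 * p.2 - h1))

lemma Z1_hasFDerivAt (k1 n1 e1 p1 s1 w1 h1 : ℝ) :
    HasFDerivAt (Z1 k1 n1 e1 p1 s1 w1 h1)
      ((((1:ℝ) • (k1 • (-(n1 • ContinuousLinearMap.fst ℝ ℝ ℝ))
            - e1 • ContinuousLinearMap.snd ℝ ℝ ℝ)
          + (k1 * (1 - n1 * 1) - e1 * 1 - w1) • ContinuousLinearMap.fst ℝ ℝ ℝ)).prod
        (((1:ℝ) • ((e1 * p1) • ContinuousLinearMap.fst ℝ ℝ ℝ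
            - s1 • ContinuousLinearMap.snd ℝ ℝ ℝ)
          + (e1 * p1 * 1 - s1 * 1 - h1) • ContinuousLinearMap.snd ℝ ℝ ℝ)))
      (1, 1) := by
  have hx : HasFDerivAt (fun p : ℝ × ℝ => p.1) (ContinuousLinearMap.fst ℝ ℝ ℝ)
      ((1 : ℝ), (1 : ℝ)) := hasFDerivAt_fst
  have hy : HasFDerivAt (fun p : ℝ × ℝ => p.2) (ContinuousLinearMap.snd ℝ ℝ ℝ)
      ((1 : ℝ), (1 : ℝ)) := hasFDerivAt_snd
  have hu : HasFDerivAt (fun p : ℝ × ℝ => k1 * (1 - n1 * p.1) - e1 * p.2 - w1)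
      (k1 • (-(n1 • ContinuousLinearMap.fst ℝ ℝ ℝ))
        - e1 • ContinuousLinearMap.snd ℝ ℝ ℝ) ((1 : ℝ), (1 : ℝ)) :=
    ((((hx.const_mul n1).const_sub 1).const_mul k1).sub (hy.const_mul e1)).sub_const w1
  have hv : HasFDerivAt (fun p : ℝ × ℝ => e1 * p1 * p.1 - s1 * p.2 - h1)
      ((e1 * p1) • ContinuousLinearMap.fst ℝ ℝ ℝ
        - s1 • ContinuousLinearMap.snd ℝ ℝ ℝ) ((1 : ℝ), (1 : ℝ)) :=
    ((hx.const_mul (e1 * p1)).sub (hy.const_mul s1)).sub_const h1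
  exact HasFDerivAt.prodMk (hx.mul hu) (hy.mul hv)

/-- Under conditions (10), `(1,1)` is an equilibrium of `Z1` whose Jacobian has
trace `t1` and determinant `a1²`. -/
theorem stmt1 (k1 n1 e1 p1 s1 w1 h1 t1 a1 : ℝ)
    (he : e1 ≠ 0)
    (hh : h1 = (k1 ^ 2 * n1 ^ 2 + e1 * k1 * n1 + k1 * n1 * t1 + a1 ^ 2 + e1 * t1) / e1)
    (hs : s1 = -(k1 * n1) - t1)
    (hp : p1 = (k1 ^ 2 * n1 ^ 2 + k1 * n1 * t1 + a1 ^ 2) / e1 ^ 2)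
    (hw : w1 = -(k1 * n1) - e1 + k1) :
    Z1 k1 n1 e1 p1 s1 w1 h1 (1, 1) = (0, 0) ∧
    (fderiv ℝ (Z1 k1 n1 e1 p1 s1 w1 h1) (1, 1) (1, 0)).1
      + (fderiv ℝ (Z1 k1 n1 e1 p1 s1 w1 h1) (1, 1) (0, 1)).2 = t1 ∧
    (fderiv ℝ (Z1 k1 n1 e1 p1 s1 w1 h1) (1, 1) (1, 0)).1
      * (fderiv ℝ (Z1 k1 n1 e1 p1 s1 w1 h1) (1, 1) (0, 1)).2
      - (fderiv ℝ (Z1 k1 n1 e1 p1 s1 w1 h1) (1, 1) (0, 1)).1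
      * (fderiv ℝ (Z1 k1 n1 e1 p1 s1 w1 h1) (1, 1) (1, 0)).2 = a1 ^ 2 := by
  have hd := (Z1_hasFDerivAt k1 n1 e1 p1 s1 w1 h1).fderiv
  refine ⟨?_, ?_, ?_⟩
  · simp only [Z1, Prod.mk.injEq]
    constructor <;> (subst hh hs hp hw; field_simp; ring)
  all_goals
    rw [hd]
    simp only [ContinuousLinearMap.prod_apply, ContinuousLinearMap.add_apply,
      ContinuousLinearMap.smul_apply, ContinuousLinearMap.sub_apply,
      ContinuousLinearMap.neg_apply, ContinuousLinearMap.coe_fst',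
      ContinuousLinearMap.coe_snd', smul_eq_mul]
    subst hh hs hp hw
    field_simp
    ring
end

section
/- Assume conditions (9). Define A(x,y) = n1·k1·(k1²n1² + e1·k1·n1 + 1)·x + e1·k1·n1·(k1·n1 + e1)·y − (k1·n1 + e1)·(k1²n1² + e1·k1·n1 + 1), B = n1·k1·(k1²n1² + e1·k1·n1 + 1)/e1, C = k1·n1·(k1·n1 + e1), and H(x,y) = A(x,y)·x^B·y^C (real powers). Then H is a first integral of the competitive system Z1 on the open first quadrant: for all x > 0 and y > 0, (∂H/∂x)(x,y)·x·(k1·(1−n1·x) − e1·y − w1) + (∂H/∂y)(x,y)·y·(e1·p1·x − s1·y − h1) = 0. -/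
open Real

/-- The affine factor `A(x,y)` of the Darboux first integral of the competitive system. -/
noncomputable def Afun (k1 n1 e1 x y : ℝ) : ℝ :=
  n1 * k1 * (k1 ^ 2 * n1 ^ 2 + e1 * k1 * n1 + 1) * x
    + e1 * k1 * n1 * (k1 * n1 + e1) * y
    - (k1 * n1 + e1) * (k1 ^ 2 * n1 ^ 2 + e1 * k1 * n1 + 1)

/-- The Darboux first integral `H(x,y) = A(x,y)·x^B·y^C` of the competitive system,
with real powers. -/
noncomputable def Hfun (k1 n1 e1 x y : ℝ) : ℝ :=
  Afun k1 n1 e1 x y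
    * x ^ (n1 * k1 * (k1 ^ 2 * n1 ^ 2 + e1 * k1 * n1 + 1) / e1)
    * y ^ (k1 * n1 * (k1 * n1 + e1))

/-- Under conditions (9), `H` is a first integral of the competitive system `Z1`
on the open first quadrant. -/
theorem stmt2 (k1 n1 e1 p1 s1 w1 h1 : ℝ)
    (he : e1 ≠ 0)
    (hh : h1 = (k1 ^ 2 * n1 ^ 2 + e1 * k1 * n1 + 1) / e1)
    (hp : p1 = (k1 ^ 2 * n1 ^ 2 + 1) / e1 ^ 2)
    (hs : s1 = -(k1 * n1))
    (hw : w1 = -(k1 * n1) - e1 + k1) :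
    ∀ x y : ℝ, 0 < x → 0 < y →
      deriv (fun s => Hfun k1 n1 e1 s y) x * (x * (k1 * (1 - n1 * x) - e1 * y - w1))
        + deriv (fun s => Hfun k1 n1 e1 x s) y * (y * (e1 * p1 * x - s1 * y - h1)) = 0 := by
  intro x y hx hy
  have hAx : HasDerivAt (fun s : ℝ => Afun k1 n1 e1 s y)
      (n1 * k1 * (k1 ^ 2 * n1 ^ 2 + e1 * k1 * n1 + 1)) x := by
    unfold Afun
    simpa using (((hasDerivAt_id x).const_mul
        (n1 * k1 * (k1 ^ 2 * n1 ^ 2 + e1 * k1 * n1 + 1))).add_const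
        (e1 * k1 * n1 * (k1 * n1 + e1) * y)).sub_const
        ((k1 * n1 + e1) * (k1 ^ 2 * n1 ^ 2 + e1 * k1 * n1 + 1))
  have hpx : HasDerivAt
      (fun s : ℝ => s ^ (n1 * k1 * (k1 ^ 2 * n1 ^ 2 + e1 * k1 * n1 + 1) / e1))
      (n1 * k1 * (k1 ^ 2 * n1 ^ 2 + e1 * k1 * n1 + 1) / e1
        * x ^ (n1 * k1 * (k1 ^ 2 * n1 ^ 2 + e1 * k1 * n1 + 1) / e1 - 1)) x :=
    Real.hasDerivAt_rpow_const (Or.inl hx.ne')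
  have hHx : HasDerivAt (fun s => Hfun k1 n1 e1 s y)
      ((n1 * k1 * (k1 ^ 2 * n1 ^ 2 + e1 * k1 * n1 + 1)
          * x ^ (n1 * k1 * (k1 ^ 2 * n1 ^ 2 + e1 * k1 * n1 + 1) / e1)
        + Afun k1 n1 e1 x y
          * (n1 * k1 * (k1 ^ 2 * n1 ^ 2 + e1 * k1 * n1 + 1) / e1
            * x ^ (n1 * k1 * (k1 ^ 2 * n1 ^ 2 + e1 * k1 * n1 + 1) / e1 - 1)))
        * y ^ (k1 * n1 * (k1 * n1 + e1))) x := by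
    simpa [Hfun] using (hAx.mul hpx).mul_const (y ^ (k1 * n1 * (k1 * n1 + e1)))
  have hAy : HasDerivAt (fun t : ℝ => Afun k1 n1 e1 x t)
      (e1 * k1 * n1 * (k1 * n1 + e1)) y := by
    unfold Afun
    simpa using (((hasDerivAt_id y).const_mul
        (e1 * k1 * n1 * (k1 * n1 + e1))).const_add
        (n1 * k1 * (k1 ^ 2 * n1 ^ 2 + e1 * k1 * n1 + 1) * x)).sub_const
        ((k1 * n1 + e1) * (k1 ^ 2 * n1 ^ 2 + e1 * k1 * n1 + 1))
  have hpy : HasDerivAt (fun t : ℝ => t ^ (k1 * n1 * (k1 * n1 + e1)))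
      (k1 * n1 * (k1 * n1 + e1) * y ^ (k1 * n1 * (k1 * n1 + e1) - 1)) y :=
    Real.hasDerivAt_rpow_const (Or.inl hy.ne')
  have hHy : HasDerivAt (fun t => Hfun k1 n1 e1 x t)
      (e1 * k1 * n1 * (k1 * n1 + e1)
          * x ^ (n1 * k1 * (k1 ^ 2 * n1 ^ 2 + e1 * k1 * n1 + 1) / e1)
          * y ^ (k1 * n1 * (k1 * n1 + e1))
        + Afun k1 n1 e1 x y
          * x ^ (n1 * k1 * (k1 ^ 2 * n1 ^ 2 + e1 * k1 * n1 + 1) / e1)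
          * (k1 * n1 * (k1 * n1 + e1) * y ^ (k1 * n1 * (k1 * n1 + e1) - 1))) y := by
    simpa [Hfun] using (hAy.mul_const
      (x ^ (n1 * k1 * (k1 ^ 2 * n1 ^ 2 + e1 * k1 * n1 + 1) / e1))).fun_mul hpy
  rw [hHx.deriv, hHy.deriv]
  rw [Real.rpow_sub hx, Real.rpow_one, Real.rpow_sub hy, Real.rpow_one]
  unfold Afun
  rw [hh, hp, hs, hw]
  set u := x ^ (n1 * k1 * (k1 ^ 2 * n1 ^ 2 + e1 * k1 * n1 + 1) / e1) with hu
  set v := y ^ (k1 * n1 * (k1 * n1 + e1)) with hv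
  have hx0 := hx.ne'
  have hy0 := hy.ne'
  field_simp
  ring
end

section
/- Assume conditions (9). Define D = (k1³n1³ + e1·k1²n1² + k1·n1 − e1)/e1 and E = k1²n1² + e1·k1·n1 − 1. Then W(x,y) = x^D·y^E is an integrating factor of the competitive system Z1 on the open first quadrant: for all x > 0 and y > 0, ∂/∂x [x^D·y^E · x·(k1·(1−n1·x) − e1·y − w1)] + ∂/∂y [x^D·y^E · y·(e1·p1·x − s1·y − h1)] = 0. -/
/-!
For a Kolmogorov field `(x·P, y·Q)` and the monomial weight `W = x^D·y^E`, the product rule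
gives `div (W·(x·P, y·Q)) = W·((D+1)·P + x·∂ₓP + (E+1)·Q + y·∂ᵧQ)`. For the competitive system
`P` and `Q` are affine in `(x, y)`, so the bracket is affine as well, and conditions (9) together
with the choice of `D` and `E` make its constant term and both of its slopes vanish.
-/

open Real

section KolmogorovWeight

variable {g : ℝ → ℝ} {g' x : ℝ}

theorem hasDerivAt_rpow_mul_self_mul (a : ℝ) (hx : 0 < x) (hg : HasDerivAt g g' x) :
    HasDerivAt (fun s => s ^ a * (s * g s)) (x ^ a * ((a + 1) * g x + x * g')) x := by
  refine ((hasDerivAt_rpow_const (Or.inl hx.ne')).mul ((hasDerivAt_id' x).mul hg)).congr_deriv ?_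
  rw [rpow_sub_one hx.ne', Pi.mul_apply]
  field_simp
  ring

theorem deriv_rpow_mul_const_mul_self_mul (a c : ℝ) (hx : 0 < x) (hg : HasDerivAt g g' x) :
    deriv (fun s => s ^ a * c * (s * g s)) x = x ^ a * c * ((a + 1) * g x + x * g') := by
  have hf : (fun s => s ^ a * c * (s * g s)) = fun s => c * (s ^ a * (s * g s)) := by
    funext s; ring
  rw [hf, ((hasDerivAt_rpow_mul_self_mul a hx hg).const_mul c).deriv]
  ring

theorem deriv_const_mul_rpow_mul_self_mul (a c : ℝ) (hx : 0 < x) (hg : HasDerivAt g g' x) :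
    deriv (fun s => c * s ^ a * (s * g s)) x = c * x ^ a * ((a + 1) * g x + x * g') := by
  simpa only [mul_comm c] using deriv_rpow_mul_const_mul_self_mul a c hx hg

end KolmogorovWeight

/-- Under conditions (9), `W(x,y) = x^D·y^E` with
`D = (k1³n1³ + e1·k1²n1² + k1·n1 − e1)/e1` and `E = k1²n1² + e1·k1·n1 − 1`
is an integrating factor of the competitive system `Z1` on the open first quadrant:
the divergence of `W·Z1` vanishes there. -/
theorem stmt3 (k1 n1 e1 p1 s1 w1 h1 : ℝ)
    (he : e1 ≠ 0)
    (hh : h1 = (k1 ^ 2 * n1 ^ 2 + e1 * k1 * n1 + 1) / e1)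
    (hp : p1 = (k1 ^ 2 * n1 ^ 2 + 1) / e1 ^ 2)
    (hs : s1 = -(k1 * n1))
    (hw : w1 = -(k1 * n1) - e1 + k1) :
    ∀ x y : ℝ, 0 < x → 0 < y →
      deriv (fun s : ℝ =>
          s ^ ((k1 ^ 3 * n1 ^ 3 + e1 * k1 ^ 2 * n1 ^ 2 + k1 * n1 - e1) / e1)
            * y ^ (k1 ^ 2 * n1 ^ 2 + e1 * k1 * n1 - 1)
            * (s * (k1 * (1 - n1 * s) - e1 * y - w1))) x
        + deriv (fun s : ℝ =>
            x ^ ((k1 ^ 3 * n1 ^ 3 + e1 * k1 ^ 2 * n1 ^ 2 + k1 * n1 - e1) / e1)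
              * s ^ (k1 ^ 2 * n1 ^ 2 + e1 * k1 * n1 - 1)
              * (s * (e1 * p1 * x - s1 * s - h1))) y = 0 := by
  intro x y hx hy
  set D := (k1 ^ 3 * n1 ^ 3 + e1 * k1 ^ 2 * n1 ^ 2 + k1 * n1 - e1) / e1
  set E := k1 ^ 2 * n1 ^ 2 + e1 * k1 * n1 - 1
  have hP : HasDerivAt (fun s => k1 * (1 - n1 * s) - e1 * y - w1) (-(k1 * n1)) x := by
    simpa using ((((hasDerivAt_id x).const_mul n1).const_sub 1).const_mul k1).sub_const (e1 * y)
      |>.sub_const w1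
  have hQ : HasDerivAt (fun s => e1 * p1 * x - s1 * s - h1) (-s1) y := by
    simpa using (((hasDerivAt_id y).const_mul s1).const_sub (e1 * p1 * x)).sub_const h1
  have bracket_eq_zero : (D + 1) * (k1 * (1 - n1 * x) - e1 * y - w1) + x * -(k1 * n1)
      + ((E + 1) * (e1 * p1 * x - s1 * y - h1) + y * -s1) = 0 := by
    subst hh hp hs hw
    simp only [D, E]
    field_simp
    ring
  rw [deriv_rpow_mul_const_mul_self_mul D (y ^ E) hx hP,
    deriv_const_mul_rpow_mul_self_mul E (x ^ D) hy hQ]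
  linear_combination x ^ D * y ^ E * bracket_eq_zero
end

section
/- Assume conditions (9). Define the linear map S : ℝ² → ℝ² by S(x,y) = ((k1·n1·x + e1·y)/e1, x/e1) and the quadratic vector field G1(x,y) = (y + k1·n1·x² − (k1²n1² + e1·k1·n1 − 1)·x·y − k1·n1·y², −x − e1·x·y). Then for all (x,y) ∈ ℝ², S(Z1(x+1, y+1)) = G1(S(x,y)); that is, after translating the equilibrium (1,1) to the origin, the linear change S conjugates the competitive system Z1 to the normal form G1. -/
/-- The linear change `S(x,y) = ((k1·n1·x + e1·y)/e1, x/e1)`. -/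
noncomputable def Smap (k1 n1 e1 : ℝ) (p : ℝ × ℝ) : ℝ × ℝ :=
  ((k1 * n1 * p.1 + e1 * p.2) / e1, p.1 / e1)

/-- The quadratic normal form `G1`. -/
noncomputable def G1 (k1 n1 e1 : ℝ) (p : ℝ × ℝ) : ℝ × ℝ :=
  (p.2 + k1 * n1 * p.1 ^ 2
      - (k1 ^ 2 * n1 ^ 2 + e1 * k1 * n1 - 1) * p.1 * p.2 - k1 * n1 * p.2 ^ 2,
   -p.1 - e1 * p.1 * p.2)

theorem Z1_shift_one_one {k1 n1 e1 p1 s1 w1 h1 : ℝ} (he : e1 ≠ 0)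
    (hh : h1 = (k1 ^ 2 * n1 ^ 2 + e1 * k1 * n1 + 1) / e1)
    (hp : p1 = (k1 ^ 2 * n1 ^ 2 + 1) / e1 ^ 2)
    (hs : s1 = -(k1 * n1))
    (hw : w1 = -(k1 * n1) - e1 + k1) (x y : ℝ) :
    Z1 k1 n1 e1 p1 s1 w1 h1 (x + 1, y + 1)
      = ((x + 1) * (-(k1 * n1 * x) - e1 * y),
         (y + 1) * ((k1 ^ 2 * n1 ^ 2 + 1) / e1 * x + k1 * n1 * y)) := by
  simp only [Z1, hh, hp, hs, hw, Prod.mk.injEq]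
  constructor
  · ring
  · field_simp
    ring

theorem Smap_shifted_field {k1 n1 e1 : ℝ} (he : e1 ≠ 0) (x y : ℝ) :
    Smap k1 n1 e1 ((x + 1) * (-(k1 * n1 * x) - e1 * y),
        (y + 1) * ((k1 ^ 2 * n1 ^ 2 + 1) / e1 * x + k1 * n1 * y))
      = G1 k1 n1 e1 (Smap k1 n1 e1 (x, y)) := by
  simp only [Smap, G1, Prod.mk.injEq]
  constructor <;> field_simp <;> ring

/-- Under conditions (9), after translating `(1,1)` to the origin, the linear change `S`
conjugates the competitive system `Z1` to the normal form `G1`. -/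
theorem stmt5 (k1 n1 e1 p1 s1 w1 h1 : ℝ)
    (he : e1 ≠ 0)
    (hh : h1 = (k1 ^ 2 * n1 ^ 2 + e1 * k1 * n1 + 1) / e1)
    (hp : p1 = (k1 ^ 2 * n1 ^ 2 + 1) / e1 ^ 2)
    (hs : s1 = -(k1 * n1))
    (hw : w1 = -(k1 * n1) - e1 + k1) :
    ∀ p : ℝ × ℝ,
      Smap k1 n1 e1 (Z1 k1 n1 e1 p1 s1 w1 h1 (p.1 + 1, p.2 + 1))
        = G1 k1 n1 e1 (Smap k1 n1 e1 p) := by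
  rintro ⟨x, y⟩
  rw [Z1_shift_one_one he hh hp hs hw, Smap_shifted_field he]
end

section
/- Assume conditions (12). Then the point (1,1) is an equilibrium of the facilitation system Z2 (i.e. Z2(1,1) = (0,0)), and the Jacobian matrix of Z2 at (1,1) has trace 0 and determinant 1. Concretely, the Jacobian of Z2 at (1,1) equals the matrix with rows (−(2k2·n2 − k2), −e2) and (((2k2·n2 − k2)² + 1)/e2, 2k2·n2 − k2). -/
/-- The facilitation resource–consumer system `Z2`. -/
noncomputable def Z2 (k2 n2 e2 p2 s2 w2 h2 : ℝ) (p : ℝ × ℝ) : ℝ × ℝ :=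
  (p.1 * (k2 * p.1 * (1 - n2 * p.1) - e2 * p.2 - w2),
   p.2 * (e2 * p2 * p.1 - s2 * p.2 - h2))

/-- Under conditions (12), `(1,1)` is an equilibrium of `Z2` whose Jacobian has
trace `0`, determinant `1`, and equals the matrix with rows
`(−(2k2·n2 − k2), −e2)` and `(((2k2·n2 − k2)² + 1)/e2, 2k2·n2 − k2)`. -/
theorem stmt8 (k2 n2 e2 p2 s2 w2 h2 : ℝ)
    (he : e2 ≠ 0)
    (hh : h2 = (4 * k2 ^ 2 * n2 ^ 2 + 2 * e2 * k2 * n2 - 4 * k2 ^ 2 * n2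
        - e2 * k2 + k2 ^ 2 + 1) / e2)
    (hp : p2 = (4 * k2 ^ 2 * n2 ^ 2 - 4 * k2 ^ 2 * n2 + k2 ^ 2 + 1) / e2 ^ 2)
    (hs : s2 = -(2 * k2 * n2) + k2)
    (hw : w2 = -(k2 * n2) - e2 + k2) :
    Z2 k2 n2 e2 p2 s2 w2 h2 (1, 1) = (0, 0) ∧
    fderiv ℝ (Z2 k2 n2 e2 p2 s2 w2 h2) (1, 1) (1, 0)
      = (-(2 * k2 * n2 - k2), ((2 * k2 * n2 - k2) ^ 2 + 1) / e2) ∧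
    fderiv ℝ (Z2 k2 n2 e2 p2 s2 w2 h2) (1, 1) (0, 1)
      = (-e2, 2 * k2 * n2 - k2) ∧
    (fderiv ℝ (Z2 k2 n2 e2 p2 s2 w2 h2) (1, 1) (1, 0)).1
      + (fderiv ℝ (Z2 k2 n2 e2 p2 s2 w2 h2) (1, 1) (0, 1)).2 = 0 ∧
    (fderiv ℝ (Z2 k2 n2 e2 p2 s2 w2 h2) (1, 1) (1, 0)).1
      * (fderiv ℝ (Z2 k2 n2 e2 p2 s2 w2 h2) (1, 1) (0, 1)).2
      - (fderiv ℝ (Z2 k2 n2 e2 p2 s2 w2 h2) (1, 1) (0, 1)).1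
      * (fderiv ℝ (Z2 k2 n2 e2 p2 s2 w2 h2) (1, 1) (1, 0)).2 = 1 := by
  have hx : HasFDerivAt (fun p : ℝ × ℝ => p.1) (ContinuousLinearMap.fst ℝ ℝ ℝ)
      ((1:ℝ),(1:ℝ)) := hasFDerivAt_fst
  have hy : HasFDerivAt (fun p : ℝ × ℝ => p.2) (ContinuousLinearMap.snd ℝ ℝ ℝ)
      ((1:ℝ),(1:ℝ)) := hasFDerivAt_snd
  have hf := hx.mul ((((hx.const_mul k2).mul ((hx.const_mul n2).const_sub 1)).sub
      (hy.const_mul e2)).sub_const w2)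
  have hg := hy.mul (((hx.const_mul (e2 * p2)).sub (hy.const_mul s2)).sub_const h2)
  have hF : HasFDerivAt (Z2 k2 n2 e2 p2 s2 w2 h2) _ ((1:ℝ),(1:ℝ)) := HasFDerivAt.prodMk hf hg
  have hfd := hF.fderiv
  have e1 := congrArg (fun L => L ((1:ℝ),(0:ℝ))) hfd
  have e2' := congrArg (fun L => L ((0:ℝ),(1:ℝ))) hfd
  simp only [ContinuousLinearMap.prod_apply, ContinuousLinearMap.add_apply,
    ContinuousLinearMap.sub_apply, ContinuousLinearMap.smul_apply,
    ContinuousLinearMap.coe_fst', ContinuousLinearMap.coe_snd',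
    ContinuousLinearMap.neg_apply, ContinuousLinearMap.smulRight_apply,
    smul_eq_mul, Pi.mul_apply, Pi.sub_apply] at e1 e2'
  rw [e1, e2']
  subst hh hp hs hw
  refine ⟨?_, ?_, ?_, ?_, ?_⟩ <;>
    simp only [Z2, Prod.mk.injEq, Prod.ext_iff, Prod.fst, Prod.snd] <;>
    first
      | (constructor <;> (field_simp; ring))
      | (field_simp; ring)
end

section
/- Let t2, a2 be real numbers and assume: e2 ≠ 0, h2 = (4k2²n2² + 2e2·k2·n2 − 4k2²n2 + 2k2·n2·t2 + a2² − e2·k2 + e2·t2 + k2² − k2·t2)/e2, p2 = (4k2²n2² − 4k2²n2 + 2k2·n2·t2 + a2² + k2² − k2·t2)/e2², s2 = −2k2·n2 + k2 − t2, w2 = −k2·n2 − e2 + k2. Then (1,1) is an equilibrium of the facilitation system Z2, and the Jacobian matrix of Z2 at (1,1) has trace t2 and determinant a2². -/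
/-- Under the stated conditions, `(1,1)` is an equilibrium of `Z2` whose Jacobian has
trace `t2` and determinant `a2²`. -/
theorem stmt9 (k2 n2 e2 p2 s2 w2 h2 t2 a2 : ℝ)
    (he : e2 ≠ 0)
    (hh : h2 = (4 * k2 ^ 2 * n2 ^ 2 + 2 * e2 * k2 * n2 - 4 * k2 ^ 2 * n2
        + 2 * k2 * n2 * t2 + a2 ^ 2 - e2 * k2 + e2 * t2 + k2 ^ 2 - k2 * t2) / e2)
    (hp : p2 = (4 * k2 ^ 2 * n2 ^ 2 - 4 * k2 ^ 2 * n2 + 2 * k2 * n2 * t2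
        + a2 ^ 2 + k2 ^ 2 - k2 * t2) / e2 ^ 2)
    (hs : s2 = -(2 * k2 * n2) + k2 - t2)
    (hw : w2 = -(k2 * n2) - e2 + k2) :
    Z2 k2 n2 e2 p2 s2 w2 h2 (1, 1) = (0, 0) ∧
    (fderiv ℝ (Z2 k2 n2 e2 p2 s2 w2 h2) (1, 1) (1, 0)).1
      + (fderiv ℝ (Z2 k2 n2 e2 p2 s2 w2 h2) (1, 1) (0, 1)).2 = t2 ∧
    (fderiv ℝ (Z2 k2 n2 e2 p2 s2 w2 h2) (1, 1) (1, 0)).1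
      * (fderiv ℝ (Z2 k2 n2 e2 p2 s2 w2 h2) (1, 1) (0, 1)).2
      - (fderiv ℝ (Z2 k2 n2 e2 p2 s2 w2 h2) (1, 1) (0, 1)).1
      * (fderiv ℝ (Z2 k2 n2 e2 p2 s2 w2 h2) (1, 1) (1, 0)).2 = a2 ^ 2 := by
  have hx : HasFDerivAt (fun p : ℝ × ℝ => p.1)
      (ContinuousLinearMap.fst ℝ ℝ ℝ) ((1 : ℝ), (1 : ℝ)) := hasFDerivAt_fst
  have hy : HasFDerivAt (fun p : ℝ × ℝ => p.2)
      (ContinuousLinearMap.snd ℝ ℝ ℝ) ((1 : ℝ), (1 : ℝ)) := hasFDerivAt_snd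
  have hf := hx.mul ((((hx.const_mul k2).mul
      ((hasFDerivAt_const (1 : ℝ) ((1 : ℝ), (1 : ℝ))).sub (hx.const_mul n2))).sub
      (hy.const_mul e2)).sub_const w2)
  have hg := hy.mul (((hx.const_mul (e2 * p2)).sub (hy.const_mul s2)).sub_const h2)
  have hZ := HasFDerivAt.prodMk hf hg
  have hfd : fderiv ℝ (Z2 k2 n2 e2 p2 s2 w2 h2) ((1 : ℝ), (1 : ℝ)) = _ := hZ.fderiv
  rw [hfd]
  simp only [Z2, ContinuousLinearMap.prod_apply, ContinuousLinearMap.add_apply,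
    ContinuousLinearMap.sub_apply, ContinuousLinearMap.smul_apply,
    ContinuousLinearMap.zero_apply, ContinuousLinearMap.coe_fst',
    ContinuousLinearMap.coe_snd', smul_eq_mul, Pi.mul_apply, Pi.sub_apply]
  subst hh hp hs hw
  refine ⟨?_, ?_, ?_⟩
  · refine Prod.ext ?_ ?_ <;> field_simp <;> ring
  · field_simp
    ring
  · field_simp
    ring
end

section
/- Assume conditions (12), V̂3 = 0, and δ ≠ 0, where δ := (8n2² − 6n2 + 1)·k2² + 2. Define A(x,y) = 2δ·(n2·x − 1)·x + k2²·(2n2 − 1)²·y + 2(2n2 − 1)·k2²·n2 + 2, C = −(2n2 − 1)·k2²/δ, and H(x,y) = A(x,y)·x^(−2)·y^C (real powers). Then H is a first integral of the facilitation system Z2 on the open first quadrant: for all x > 0 and y > 0, (∂H/∂x)(x,y)·x·(k2·x·(1−n2·x) − e2·y − w2) + (∂H/∂y)(x,y)·y·(e2·p2·x − s2·y − h2) = 0. (This is the sufficiency part of Theorem 2.3: under the center condition V̂3 = 0 the point (1,1) is surrounded by a Darboux first integral.) -/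
open Real

/-- The Darboux first integral `H(x,y) = A(x,y)·x^(−2)·y^C` of the facilitation system,
with `δ = (8n2² − 6n2 + 1)·k2² + 2`,
`A(x,y) = 2δ·(n2·x − 1)·x + k2²·(2n2 − 1)²·y + 2(2n2 − 1)·k2²·n2 + 2`, and
`C = −(2n2 − 1)·k2²/δ`. -/
noncomputable def Hfun2 (k2 n2 : ℝ) (x y : ℝ) : ℝ :=
  (2 * ((8 * n2 ^ 2 - 6 * n2 + 1) * k2 ^ 2 + 2) * (n2 * x - 1) * x
      + k2 ^ 2 * (2 * n2 - 1) ^ 2 * y + 2 * (2 * n2 - 1) * k2 ^ 2 * n2 + 2)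
    * x ^ (-2 : ℝ)
    * y ^ (-((2 * n2 - 1) * k2 ^ 2) / ((8 * n2 ^ 2 - 6 * n2 + 1) * k2 ^ 2 + 2))

set_option maxHeartbeats 4000000 in
/-- Under conditions (12) and the center condition `V̂3 = 0` (with `δ ≠ 0`),
`H` is a first integral of the facilitation system `Z2` on the open first quadrant. -/
theorem stmt10 (k2 n2 e2 p2 s2 w2 h2 : ℝ)
    (he : e2 ≠ 0)
    (hh : h2 = (4 * k2 ^ 2 * n2 ^ 2 + 2 * e2 * k2 * n2 - 4 * k2 ^ 2 * n2
        - e2 * k2 + k2 ^ 2 + 1) / e2)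
    (hp : p2 = (4 * k2 ^ 2 * n2 ^ 2 - 4 * k2 ^ 2 * n2 + k2 ^ 2 + 1) / e2 ^ 2)
    (hs : s2 = -(2 * k2 * n2) + k2)
    (hw : w2 = -(k2 * n2) - e2 + k2)
    (hV3 : k2 ^ 3 * (2 * n2 - 1) ^ 3 + e2 * k2 ^ 2 * (4 * n2 - 1) * (2 * n2 - 1)
        + k2 * (2 * n2 - 1) + 2 * e2 = 0)
    (hδ : (8 * n2 ^ 2 - 6 * n2 + 1) * k2 ^ 2 + 2 ≠ 0) :
    ∀ x y : ℝ, 0 < x → 0 < y →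
      deriv (fun s => Hfun2 k2 n2 s y) x
          * (x * (k2 * x * (1 - n2 * x) - e2 * y - w2))
        + deriv (fun s => Hfun2 k2 n2 x s) y
          * (y * (e2 * p2 * x - s2 * y - h2)) = 0 := by
  intro x y hx hy
  subst hh hp hs hw
  have hx0 : x ≠ 0 := ne_of_gt hx
  have hy0 : y ≠ 0 := ne_of_gt hy
  have hfx : (fun s => Hfun2 k2 n2 s y)
      = (fun s => (2 * ((8 * n2 ^ 2 - 6 * n2 + 1) * k2 ^ 2 + 2) * ((n2 * s - 1) * s)
            + (k2 ^ 2 * (2 * n2 - 1) ^ 2 * y + 2 * (2 * n2 - 1) * k2 ^ 2 * n2 + 2))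
          * s ^ (-2 : ℝ)
          * y ^ (-((2 * n2 - 1) * k2 ^ 2) / ((8 * n2 ^ 2 - 6 * n2 + 1) * k2 ^ 2 + 2))) := by
    funext s; simp only [Hfun2]; ring
  have hfy : (fun s => Hfun2 k2 n2 x s)
      = (fun s => (2 * ((8 * n2 ^ 2 - 6 * n2 + 1) * k2 ^ 2 + 2) * (n2 * x - 1) * x
            + 2 * (2 * n2 - 1) * k2 ^ 2 * n2 + 2 + k2 ^ 2 * (2 * n2 - 1) ^ 2 * s)
          * x ^ (-2 : ℝ)
          * s ^ (-((2 * n2 - 1) * k2 ^ 2) / ((8 * n2 ^ 2 - 6 * n2 + 1) * k2 ^ 2 + 2))) := by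
    funext s; simp only [Hfun2]; ring
  have hr2 : HasDerivAt (fun s : ℝ => s ^ (-2 : ℝ)) (-(2 * x ^ (-3 : ℝ))) x := by
    have h := Real.hasDerivAt_rpow_const (x := x) (p := (-2 : ℝ)) (Or.inl hx0)
    rw [show (-2:ℝ) - 1 = -3 by norm_num, neg_mul] at h
    exact h
  have hpoly : HasDerivAt
      (fun s : ℝ => 2 * ((8 * n2 ^ 2 - 6 * n2 + 1) * k2 ^ 2 + 2) * ((n2 * s - 1) * s)
        + (k2 ^ 2 * (2 * n2 - 1) ^ 2 * y + 2 * (2 * n2 - 1) * k2 ^ 2 * n2 + 2))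
      (2 * ((8 * n2 ^ 2 - 6 * n2 + 1) * k2 ^ 2 + 2) * (n2 * 1 * x + (n2 * x - 1) * 1)) x :=
    ((((hasDerivAt_id x).const_mul n2).sub_const 1).mul (hasDerivAt_id x)).const_mul
        (2 * ((8 * n2 ^ 2 - 6 * n2 + 1) * k2 ^ 2 + 2)) |>.add_const _
  have hlin : HasDerivAt
      (fun s : ℝ => 2 * ((8 * n2 ^ 2 - 6 * n2 + 1) * k2 ^ 2 + 2) * (n2 * x - 1) * x
        + 2 * (2 * n2 - 1) * k2 ^ 2 * n2 + 2 + k2 ^ 2 * (2 * n2 - 1) ^ 2 * s)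
      (k2 ^ 2 * (2 * n2 - 1) ^ 2 * 1) y :=
    ((hasDerivAt_id y).const_mul (k2 ^ 2 * (2 * n2 - 1) ^ 2)).const_add _
  have hry : HasDerivAt
      (fun s : ℝ => s ^ (-((2 * n2 - 1) * k2 ^ 2) / ((8 * n2 ^ 2 - 6 * n2 + 1) * k2 ^ 2 + 2)))
      ((-((2 * n2 - 1) * k2 ^ 2) / ((8 * n2 ^ 2 - 6 * n2 + 1) * k2 ^ 2 + 2))
        * y ^ ((-((2 * n2 - 1) * k2 ^ 2) / ((8 * n2 ^ 2 - 6 * n2 + 1) * k2 ^ 2 + 2)) - 1)) y :=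
    Real.hasDerivAt_rpow_const (Or.inl hy0)
  have hdx := ((hpoly.mul hr2).mul_const
      (y ^ (-((2 * n2 - 1) * k2 ^ 2) / ((8 * n2 ^ 2 - 6 * n2 + 1) * k2 ^ 2 + 2)))).deriv
  have hdy := ((hlin.mul_const (x ^ (-2 : ℝ))).mul hry).deriv
  simp only [Pi.mul_def] at hdx hdy
  rw [hfx, hfy, hdx, hdy]
  have hx23 : x ^ (-2 : ℝ) = x * x ^ (-3 : ℝ) := by
    rw [show (-2 : ℝ) = 1 + -3 by norm_num, Real.rpow_add hx, Real.rpow_one]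
  have hyE : y ^ (-((2 * n2 - 1) * k2 ^ 2) / ((8 * n2 ^ 2 - 6 * n2 + 1) * k2 ^ 2 + 2))
      = y * y ^ ((-((2 * n2 - 1) * k2 ^ 2) / ((8 * n2 ^ 2 - 6 * n2 + 1) * k2 ^ 2 + 2)) - 1) := by
    conv_lhs => rw [show (-((2 * n2 - 1) * k2 ^ 2) / ((8 * n2 ^ 2 - 6 * n2 + 1) * k2 ^ 2 + 2))
      = 1 + ((-((2 * n2 - 1) * k2 ^ 2) / ((8 * n2 ^ 2 - 6 * n2 + 1) * k2 ^ 2 + 2)) - 1) by ring]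
    rw [Real.rpow_add hy, Real.rpow_one]
  rw [hx23, hyE]
  set B : ℝ :=
      (2 * ((8 * n2 ^ 2 - 6 * n2 + 1) * k2 ^ 2 + 2) * (2 * n2 * x - 1) * x
        - 2 * (2 * ((8 * n2 ^ 2 - 6 * n2 + 1) * k2 ^ 2 + 2) * (n2 * x - 1) * x
            + k2 ^ 2 * (2 * n2 - 1) ^ 2 * y + 2 * (2 * n2 - 1) * k2 ^ 2 * n2 + 2)) * y
        * (x * (k2 * x * (1 - n2 * x) - e2 * y - (-(k2 * n2) - e2 + k2)))
      + (k2 ^ 2 * (2 * n2 - 1) ^ 2 * y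
          + (-((2 * n2 - 1) * k2 ^ 2) / ((8 * n2 ^ 2 - 6 * n2 + 1) * k2 ^ 2 + 2))
            * (2 * ((8 * n2 ^ 2 - 6 * n2 + 1) * k2 ^ 2 + 2) * (n2 * x - 1) * x
              + k2 ^ 2 * (2 * n2 - 1) ^ 2 * y + 2 * (2 * n2 - 1) * k2 ^ 2 * n2 + 2)) * x
        * (y * (e2 * ((4 * k2 ^ 2 * n2 ^ 2 - 4 * k2 ^ 2 * n2 + k2 ^ 2 + 1) / e2 ^ 2) * x
            - (-(2 * k2 * n2) + k2) * y
            - (4 * k2 ^ 2 * n2 ^ 2 + 2 * e2 * k2 * n2 - 4 * k2 ^ 2 * n2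
                - e2 * k2 + k2 ^ 2 + 1) / e2)) with hBdef
  have key : ((8 * n2 ^ 2 - 6 * n2 + 1) * k2 ^ 2 + 2) * e2 * B
      = (k2 ^ 3 * (2 * n2 - 1) ^ 3 + e2 * k2 ^ 2 * (4 * n2 - 1) * (2 * n2 - 1)
          + k2 * (2 * n2 - 1) + 2 * e2) * ((-4)*e2*x*y + 4*e2*x*y ^ 2 + 4*e2*x ^ 2*y + (-4)*e2*x ^ 2*y ^ 2 + 2*k2*x*y + 2*k2*x*y ^ 2 + (-6)*k2*x ^ 2*y + (-2)*k2*x ^ 2*y ^ 2 + 4*k2*x ^ 3*y + (-4)*k2*n2*x*y ^ 2 + 4*k2*n2*x ^ 2*y ^ 2 + 4*k2*n2*x ^ 3*y + (-4)*k2*n2*x ^ 4*y + (-2)*k2 ^ 2*e2*x*y ^ 2 + 2*k2 ^ 2*e2*x*y ^ 3 + 2*k2 ^ 2*e2*x ^ 2*y + (-2)*k2 ^ 2*e2*x ^ 2*y ^ 2 + 4*k2 ^ 2*n2*e2*x*y + 4*k2 ^ 2*n2*e2*x*y ^ 2 + (-8)*k2 ^ 2*n2*e2*x*y ^ 3 +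 (-12)*k2 ^ 2*n2*e2*x ^ 2*y + 12*k2 ^ 2*n2*e2*x ^ 2*y ^ 2 + (-8)*k2 ^ 2*n2 ^ 2*e2*x*y + 8*k2 ^ 2*n2 ^ 2*e2*x*y ^ 3 + 16*k2 ^ 2*n2 ^ 2*e2*x ^ 2*y + (-16)*k2 ^ 2*n2 ^ 2*e2*x ^ 2*y ^ 2 + 2*k2 ^ 3*x*y ^ 2 + (-2)*k2 ^ 3*x ^ 2*y + (-2)*k2 ^ 3*x ^ 2*y ^ 2 + 2*k2 ^ 3*x ^ 3*y + (-2)*k2 ^ 3*n2*x*y + (-12)*k2 ^ 3*n2*x*y ^ 2 + 14*k2 ^ 3*n2*x ^ 2*y + 12*k2 ^ 3*n2*x ^ 2*y ^ 2 + (-10)*k2 ^ 3*n2*x ^ 3*y + (-2)*k2 ^ 3*n2*x ^ 4*y + 4*k2 ^ 3*n2 ^ 2*x*y + 24*k2 ^ 3*n2 ^ 2*x*y ^ 2 + (-20)*k2 ^ 3*n2 ^ 2*x ^ 2*y + (-24)*k2 ^ 3*n2 ^ 2*x ^ 2*y ^ 2 + 4*k2 ^ 3*n2 ^ 2*x ^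 3*y + 12*k2 ^ 3*n2 ^ 2*x ^ 4*y + (-16)*k2 ^ 3*n2 ^ 3*x*y ^ 2 + 16*k2 ^ 3*n2 ^ 3*x ^ 2*y ^ 2 + 16*k2 ^ 3*n2 ^ 3*x ^ 3*y + (-16)*k2 ^ 3*n2 ^ 3*x ^ 4*y) := by
    rw [hBdef]
    have hδ' : (n2 * (8 * n2 - 6) + 1) * k2 ^ 2 + 2 ≠ 0 := by convert hδ using 1; ring
    field_simp
    ring
  have hB : B = 0 := by
    have h0 : ((8 * n2 ^ 2 - 6 * n2 + 1) * k2 ^ 2 + 2) * e2 * B = 0 := by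
      rw [key, hV3, zero_mul]
    rcases mul_eq_zero.mp h0 with h | h
    · rcases mul_eq_zero.mp h with h' | h'
      · exact absurd h' hδ
      · exact absurd h' he
    · exact h
  linear_combination (x ^ (-3 : ℝ)
    * y ^ ((-((2 * n2 - 1) * k2 ^ 2) / ((8 * n2 ^ 2 - 6 * n2 + 1) * k2 ^ 2 + 2)) - 1)) * hB
end

section
/- Assume conditions (12), V̂3 = 0, and δ ≠ 0, where δ := (8n2² − 6n2 + 1)·k2² + 2. Define E = −2·(4k2²n2² − 2k2²n2 + 1)/δ. Then W(x,y) = x^(−3)·y^E is an integrating factor of the facilitation system Z2 on the open first quadrant: for all x > 0 and y > 0, ∂/∂x [x^(−3)·y^E · x·(k2·x·(1−n2·x) − e2·y − w2)] + ∂/∂y [x^(−3)·y^E · y·(e2·p2·x − s2·y − h2)] = 0. -/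
open Real

/-- Under conditions (12), the center condition `V̂3 = 0`, and `δ ≠ 0`,
`W(x,y) = x^(−3)·y^E` with `E = −2·(4k2²n2² − 2k2²n2 + 1)/δ` is an integrating factor
of the facilitation system `Z2` on the open first quadrant. -/
theorem stmt11 (k2 n2 e2 p2 s2 w2 h2 : ℝ)
    (he : e2 ≠ 0)
    (hh : h2 = (4 * k2 ^ 2 * n2 ^ 2 + 2 * e2 * k2 * n2 - 4 * k2 ^ 2 * n2
        - e2 * k2 + k2 ^ 2 + 1) / e2)
    (hp : p2 = (4 * k2 ^ 2 * n2 ^ 2 - 4 * k2 ^ 2 * n2 + k2 ^ 2 + 1) / e2 ^ 2)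
    (hs : s2 = -(2 * k2 * n2) + k2)
    (hw : w2 = -(k2 * n2) - e2 + k2)
    (hV3 : k2 ^ 3 * (2 * n2 - 1) ^ 3 + e2 * k2 ^ 2 * (4 * n2 - 1) * (2 * n2 - 1)
        + k2 * (2 * n2 - 1) + 2 * e2 = 0)
    (hδ : (8 * n2 ^ 2 - 6 * n2 + 1) * k2 ^ 2 + 2 ≠ 0) :
    ∀ x y : ℝ, 0 < x → 0 < y →
      deriv (fun s : ℝ =>
          s ^ (-3 : ℝ)
            * y ^ (-2 * (4 * k2 ^ 2 * n2 ^ 2 - 2 * k2 ^ 2 * n2 + 1)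
                / ((8 * n2 ^ 2 - 6 * n2 + 1) * k2 ^ 2 + 2))
            * (s * (k2 * s * (1 - n2 * s) - e2 * y - w2))) x
        + deriv (fun s : ℝ =>
            x ^ (-3 : ℝ)
              * s ^ (-2 * (4 * k2 ^ 2 * n2 ^ 2 - 2 * k2 ^ 2 * n2 + 1)
                  / ((8 * n2 ^ 2 - 6 * n2 + 1) * k2 ^ 2 + 2))
              * (s * (e2 * p2 * x - s2 * s - h2))) y = 0 := by
  intro x y hx hy
  set E : ℝ := -2 * (4 * k2 ^ 2 * n2 ^ 2 - 2 * k2 ^ 2 * n2 + 1)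
      / ((8 * n2 ^ 2 - 6 * n2 + 1) * k2 ^ 2 + 2) with hE
  have hP : HasDerivAt (fun s : ℝ => s * (k2 * s * (1 - n2 * s) - e2 * y - w2)) _ x :=
    (hasDerivAt_id' x).mul
      ((((hasDerivAt_id' x).const_mul k2).mul
        ((hasDerivAt_const x (1:ℝ)).sub ((hasDerivAt_id' x).const_mul n2))).sub_const
          (e2 * y) |>.sub_const w2)
  have hQ : HasDerivAt (fun s : ℝ => s * (e2 * p2 * x - s2 * s - h2)) _ y :=
    (hasDerivAt_id' y).mul
      (((hasDerivAt_const y (e2 * p2 * x)).sub ((hasDerivAt_id' y).const_mul s2)).sub_const h2)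
  have d1 : deriv (fun s : ℝ =>
      s ^ (-3 : ℝ) * y ^ E * (s * (k2 * s * (1 - n2 * s) - e2 * y - w2))) x = _ :=
    (((hasDerivAt_rpow_const (p := (-3:ℝ)) (Or.inl hx.ne')).mul_const (y ^ E)).mul hP).deriv
  have d2 : deriv (fun s : ℝ =>
      x ^ (-3:ℝ) * s ^ E * (s * (e2 * p2 * x - s2 * s - h2))) y = _ :=
    (((hasDerivAt_rpow_const (p := E) (Or.inl hy.ne')).const_mul (x ^ (-3:ℝ))).mul hQ).deriv
  rw [d1, d2,
    show x ^ ((-3:ℝ) - 1) = x ^ (-3:ℝ) / x by rw [Real.rpow_sub hx, Real.rpow_one],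
    show y ^ (E - 1) = y ^ E / y by rw [Real.rpow_sub hy, Real.rpow_one]]
  have hB : (-3) * (k2 * x * (1 - n2 * x) - e2 * y - w2)
      + (1 * (k2 * x * (1 - n2 * x) - e2 * y - w2)
          + x * (k2 * 1 * (1 - n2 * x) + k2 * x * (0 - n2 * 1)))
      + E * (e2 * p2 * x - s2 * y - h2)
      + (1 * (e2 * p2 * x - s2 * y - h2) + y * (0 - s2 * 1)) = 0 := by
    subst hh hp hs hw
    have he2 : e2 = -(k2 * (2 * n2 - 1) * (4 * k2 ^ 2 * n2 ^ 2 - 4 * k2 ^ 2 * n2 + k2 ^ 2 + 1))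
        / ((8 * n2 ^ 2 - 6 * n2 + 1) * k2 ^ 2 + 2) := by
      rw [eq_div_iff hδ]; linear_combination hV3
    have hnum : k2 * (2 * n2 - 1) * (4 * k2 ^ 2 * n2 ^ 2 - 4 * k2 ^ 2 * n2 + k2 ^ 2 + 1) ≠ 0 := by
      intro h
      apply he
      rw [he2, h, neg_zero, zero_div]
    have hk2 : k2 ≠ 0 := fun h => hnum (by rw [h]; ring)
    have hu : 2 * n2 - 1 ≠ 0 := fun h => hnum (by rw [mul_assoc, h, zero_mul, mul_zero])
    have hN : 4 * k2 ^ 2 * n2 ^ 2 - 4 * k2 ^ 2 * n2 + k2 ^ 2 + 1 ≠ 0 := by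
      intro h; exact hnum (by rw [h, mul_zero])
    subst he2
    rw [hE]
    have hm : (2 * n2 - 1) * (4 * k2 ^ 2 * n2 ^ 2 - 4 * k2 ^ 2 * n2 + k2 ^ 2 + 1) ≠ 0 := mul_ne_zero hu hN
    have h1 : k2 ^ 2 * (n2 * (n2 * 8 - 6) + 1) + 2 ≠ 0 := by contrapose! hδ; linear_combination hδ
    have h2 : k2 ^ 2 * (n2 * 4 * (n2 - 1) + 1) + 1 ≠ 0 := by contrapose! hN; linear_combination hN
    have h3 : n2 * 2 - 1 ≠ 0 := by contrapose! hu; linear_combination hu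
    field_simp
    ring
  have hx' : x ≠ 0 := hx.ne'
  have hy' : y ≠ 0 := hy.ne'
  trans (x ^ (-3 : ℝ) * y ^ E *
      ((-3) * (k2 * x * (1 - n2 * x) - e2 * y - w2)
      + (1 * (k2 * x * (1 - n2 * x) - e2 * y - w2)
          + x * (k2 * 1 * (1 - n2 * x) + k2 * x * (0 - n2 * 1)))
      + E * (e2 * p2 * x - s2 * y - h2)
      + (1 * (e2 * p2 * x - s2 * y - h2) + y * (0 - s2 * 1))))
  · field_simp
    simp only [Pi.sub_apply]
    ring
  · rw [hB, mul_zero]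
end

section
/- Assume conditions (9) for the parameters k1, n1, e1, p1, s1, w1, h1, and let k2, n2, e2 be real numbers satisfying V̂2 = 0 and V̂3 = 0. Set δ := (8n2² − 6n2 + 1)·k2² + 2 and ρ := δ·k1²·n1² + (2n2 − 1)·k2², and assume δ ≠ 0 and ρ ≠ 0. Define D1 = −((16n2² − 14n2 + 3)·k1²·k2²·n1² + 4k1²n1² + (2n2 − 1)·k2²)/ρ and E1 = −2·(2·(2n2−1)·k2²·n2 + 1)/δ. Then W(x,y) = x^(D1)·y^(E1) is an integrating factor of the competitive system Z1 on the open first quadrant: for all x > 0 and y > 0, ∂/∂x [x^(D1)·y^(E1) · x·(k1·(1−n1·x) − e1·y − w1)] + ∂/∂y [x^(D1)·y^(E1) · y·(e1·p1·x − s1·y − h1)] = 0. -/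
open Real

lemma rpow_shift {x : ℝ} (hx : 0 < x) (D : ℝ) :
    x ^ (D - 1) * x = x ^ D := by
  rw [show x ^ (D-1) * x = x ^ (D-1) * x ^ (1:ℝ) by rw [Real.rpow_one],
    ← Real.rpow_add hx]; ring_nf

lemma deriv_aux (c1 c2 D : ℝ) {x : ℝ} (hx : 0 < x) :
    deriv (fun s : ℝ => s ^ D * (c1 * s + c2 * s ^ 2)) x
      = (D + 1) * c1 * x ^ D + (D + 2) * c2 * x ^ (D + 1) := by
  have h1 : HasDerivAt (fun s : ℝ => s ^ D) (D * x ^ (D - 1)) x :=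
    Real.hasDerivAt_rpow_const (Or.inl hx.ne')
  have h2 : HasDerivAt (fun s : ℝ => c1 * s + c2 * s ^ 2) (c1 + c2 * (2 * x)) x := by
    have := ((hasDerivAt_id x).const_mul c1).add
      (((hasDerivAt_pow 2 x)).const_mul c2)
    simpa [Pi.add_def] using this
  have h := h1.mul h2
  rw [show (fun s : ℝ => s ^ D * (c1 * s + c2 * s ^ 2)) = (fun s : ℝ => s ^ D) * (fun s : ℝ => c1 * s + c2 * s ^ 2) from rfl, h.deriv]
  have e1 : x ^ (D - 1) * x = x ^ D := rpow_shift hx D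
  have e2 : x ^ D * x = x ^ (D + 1) := by
    have := rpow_shift hx (D + 1); simpa using this
  have e3 : x ^ (D - 1) * x ^ 2 = x ^ (D + 1) := by
    rw [sq, ← mul_assoc, e1, e2]
  linear_combination (D * c1) * e1 + (D * c2) * e3 + (2 * c2) * e2

/-- Under conditions (9) and the piecewise center conditions `V̂2 = V̂3 = 0` (with
`δ ≠ 0`, `ρ ≠ 0`), `W(x,y) = x^(D1)·y^(E1)` with
`D1 = −((16n2²−14n2+3)·k1²k2²n1² + 4k1²n1² + (2n2−1)·k2²)/ρ` and
`E1 = −2·(2(2n2−1)·k2²·n2 + 1)/δ` is an integrating factor of the competitive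
system `Z1` on the open first quadrant. -/
theorem stmt17 (k1 n1 e1 p1 s1 w1 h1 k2 n2 e2 : ℝ)
    (he : e1 ≠ 0)
    (hh : h1 = (k1 ^ 2 * n1 ^ 2 + e1 * k1 * n1 + 1) / e1)
    (hp : p1 = (k1 ^ 2 * n1 ^ 2 + 1) / e1 ^ 2)
    (hs : s1 = -(k1 * n1))
    (hw : w1 = -(k1 * n1) - e1 + k1)
    (hV2 : 4 * (e2 + k2 * n2 - k2) * k2 * n2 - (k1 * n1 + e1) * k1 * n1
        + (k2 - e2) * k2 = 0)
    (hV3 : k2 ^ 3 * (2 * n2 - 1) ^ 3 + e2 * k2 ^ 2 * (4 * n2 - 1) * (2 * n2 - 1)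
        + k2 * (2 * n2 - 1) + 2 * e2 = 0)
    (hδ : (8 * n2 ^ 2 - 6 * n2 + 1) * k2 ^ 2 + 2 ≠ 0)
    (hρ : ((8 * n2 ^ 2 - 6 * n2 + 1) * k2 ^ 2 + 2) * k1 ^ 2 * n1 ^ 2
        + (2 * n2 - 1) * k2 ^ 2 ≠ 0) :
    ∀ x y : ℝ, 0 < x → 0 < y →
      deriv (fun s : ℝ =>
          s ^ (-((16 * n2 ^ 2 - 14 * n2 + 3) * k1 ^ 2 * k2 ^ 2 * n1 ^ 2
                  + 4 * k1 ^ 2 * n1 ^ 2 + (2 * n2 - 1) * k2 ^ 2)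
              / (((8 * n2 ^ 2 - 6 * n2 + 1) * k2 ^ 2 + 2) * k1 ^ 2 * n1 ^ 2
                  + (2 * n2 - 1) * k2 ^ 2))
            * y ^ (-2 * (2 * (2 * n2 - 1) * k2 ^ 2 * n2 + 1)
                / ((8 * n2 ^ 2 - 6 * n2 + 1) * k2 ^ 2 + 2))
            * (s * (k1 * (1 - n1 * s) - e1 * y - w1))) x
        + deriv (fun s : ℝ =>
            x ^ (-((16 * n2 ^ 2 - 14 * n2 + 3) * k1 ^ 2 * k2 ^ 2 * n1 ^ 2
                    + 4 * k1 ^ 2 * n1 ^ 2 + (2 * n2 - 1) * k2 ^ 2)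
                / (((8 * n2 ^ 2 - 6 * n2 + 1) * k2 ^ 2 + 2) * k1 ^ 2 * n1 ^ 2
                    + (2 * n2 - 1) * k2 ^ 2))
              * s ^ (-2 * (2 * (2 * n2 - 1) * k2 ^ 2 * n2 + 1)
                  / ((8 * n2 ^ 2 - 6 * n2 + 1) * k2 ^ 2 + 2))
              * (s * (e1 * p1 * x - s1 * s - h1))) y = 0 := by
  intro x y hx hy
  set δ : ℝ := (8 * n2 ^ 2 - 6 * n2 + 1) * k2 ^ 2 + 2 with hδdef
  set ρ : ℝ := δ * k1 ^ 2 * n1 ^ 2 + (2 * n2 - 1) * k2 ^ 2 with hρdef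
  set D : ℝ := -((16 * n2 ^ 2 - 14 * n2 + 3) * k1 ^ 2 * k2 ^ 2 * n1 ^ 2
      + 4 * k1 ^ 2 * n1 ^ 2 + (2 * n2 - 1) * k2 ^ 2) / ρ with hDdef
  set E : ℝ := -2 * (2 * (2 * n2 - 1) * k2 ^ 2 * n2 + 1) / δ with hEdef
  have key : e1 * (k1 * n1) * δ + ρ = 0 := by
    rw [hδdef, hρdef]
    linear_combination k2 * (4 * n2 - 1) * hV3
      - ((8 * n2 ^ 2 - 6 * n2 + 1) * k2 ^ 2 + 2) * hV2
  have hR1 : D * ρ = -((16 * n2 ^ 2 - 14 * n2 + 3) * k1 ^ 2 * k2 ^ 2 * n1 ^ 2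
      + 4 * k1 ^ 2 * n1 ^ 2 + (2 * n2 - 1) * k2 ^ 2) := by
    rw [hDdef]; field_simp
  have hR2 : E * δ = -(2 * (2 * (2 * n2 - 1) * k2 ^ 2 * n2 + 1)) := by
    rw [hEdef]; field_simp
  have hh' : h1 * e1 = k1 ^ 2 * n1 ^ 2 + e1 * k1 * n1 + 1 := by
    rw [hh]; field_simp
  have hp' : p1 * e1 ^ 2 = k1 ^ 2 * n1 ^ 2 + 1 := by
    rw [hp]; field_simp
  -- abbreviations used only in the coefficients below:
  -- m := k1*n1, G := (2*n2-1)^2*k2^2+1, M := 2*(2*n2-1)*k2^2*n2+1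
  have M1 : ((D + 1) * (k1 - w1) - (E + 1) * h1) * (ρ * δ * δ * e1) = 0 := by
    rw [hw]
    linear_combination ((k1 * n1 + e1) * δ ^ 2 * e1) * hR1
      + (-(h1 * ρ * δ * e1)) * hR2
      + ((2 * (2 * (2 * n2 - 1) * k2 ^ 2 * n2 + 1) - δ) * δ * ρ) * hh'
      + (-(2 * (k1 * n1) ^ 2 * ((2 * n2 - 1) ^ 2 * k2 ^ 2 + 1) * δ)
          - 2 * (k1 * n1) * ((2 * n2 - 1) ^ 2 * k2 ^ 2 + 1) * e1 * δ
          + (2 * n2 - 1) * k2 ^ 2 * ρ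
          + 2 * ((2 * n2 - 1) ^ 2 * k2 ^ 2 + 1) * ρ) * key
  have M2 : (-(k1 * n1) * (D + 2) + e1 * p1 * (E + 1)) * (ρ * δ * e1) = 0 := by
    linear_combination (-(k1 * n1) * δ * e1) * hR1
      + (p1 * ρ * e1 ^ 2) * hR2
      + ((δ - 2 * (2 * (2 * n2 - 1) * k2 ^ 2 * n2 + 1)) * ρ) * hp'
      + (2 * (k1 * n1) ^ 2 * ((2 * n2 - 1) ^ 2 * k2 ^ 2 + 1) - ρ) * key
  have M3 : (-e1 * (D + 1) - s1 * (E + 2)) * (ρ * δ) = 0 := by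
    rw [hs]
    linear_combination (-e1 * δ) * hR1 + ((k1 * n1) * ρ) * hR2
      + (2 * (k1 * n1) * ((2 * n2 - 1) ^ 2 * k2 ^ 2 + 1)) * key
  have L1 : (D + 1) * (k1 - w1) - (E + 1) * h1 = 0 :=
    (mul_eq_zero.mp M1).resolve_right
      (mul_ne_zero (mul_ne_zero (mul_ne_zero hρ hδ) hδ) he)
  have L2 : -(k1 * n1) * (D + 2) + e1 * p1 * (E + 1) = 0 :=
    (mul_eq_zero.mp M2).resolve_right
      (mul_ne_zero (mul_ne_zero hρ hδ) he)
  have L3 : -e1 * (D + 1) - s1 * (E + 2) = 0 :=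
    (mul_eq_zero.mp M3).resolve_right (mul_ne_zero hρ hδ)
  have d1 := deriv_aux (y ^ E * (k1 - e1 * y - w1)) (-(y ^ E * (k1 * n1))) D hx
  have d2 := deriv_aux (x ^ D * (e1 * p1 * x - h1)) (-(x ^ D * s1)) E hy
  have f1 : (fun s : ℝ => s ^ D * y ^ E * (s * (k1 * (1 - n1 * s) - e1 * y - w1)))
      = fun s : ℝ => s ^ D * ((y ^ E * (k1 - e1 * y - w1)) * s
          + (-(y ^ E * (k1 * n1))) * s ^ 2) := by
    funext s; ring
  have f2 : (fun s : ℝ => x ^ D * s ^ E * (s * (e1 * p1 * x - s1 * s - h1)))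
      = fun s : ℝ => s ^ E * ((x ^ D * (e1 * p1 * x - h1)) * s
          + (-(x ^ D * s1)) * s ^ 2) := by
    funext s; ring
  rw [f1, f2, d1, d2]
  have ex : x ^ (D + 1) = x ^ D * x := (rpow_shift hx (D + 1)).symm.trans (by ring_nf)
  have ey : y ^ (E + 1) = y ^ E * y := (rpow_shift hy (E + 1)).symm.trans (by ring_nf)
  rw [ex, ey]
  have expand : (D + 1) * (y ^ E * (k1 - e1 * y - w1)) * x ^ D
      + (D + 2) * (-(y ^ E * (k1 * n1))) * (x ^ D * x)
      + ((E + 1) * (x ^ D * (e1 * p1 * x - h1)) * y ^ E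
      + (E + 2) * (-(x ^ D * s1)) * (y ^ E * y))
      = x ^ D * y ^ E * (((D + 1) * (k1 - w1) - (E + 1) * h1)
        + (-(k1 * n1) * (D + 2) + e1 * p1 * (E + 1)) * x
        + (-e1 * (D + 1) - s1 * (E + 2)) * y) := by ring
  rw [expand, L1, L2, L3]
  ring
end

section
/- Under conditions S, i.e. k1·(1 − n1) − e1 − w1 = 0, e1·p1 − s1 − h1 = 0, k2·(1 − n2) − e2 − w2 = 0 and e2·p2 − s2 − h2 = 0, the point (1,1) lying on the separation line Σ = {x = 1} is an equilibrium of both the competitive system Z1 and the facilitation system Z2, i.e. Z1(1,1) = (0,0) and Z2(1,1) = (0,0). Moreover, let k1 = (sqrt(401) − 1)/5, n1 = 1/4, e1 = 2, k2 = 5/2, n2 = 1/10, e2 = (619 − 19·sqrt(401))/300. Then V̂2 = 0 and V̂3 = 19·(1 − sqrt(401))/60, so V̂3 ≠ 0; these are the computational identities underlying the existence of a weak focus of maximal order three at (1,1) for the piecewise system (Corollary 3.2). -/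
/-!
At `(1, 1)` each component of `Z1` and `Z2` is exactly one of the expressions of conditions `S`.
For `k2 = 5/2`, `n2 = 1/10` the centre quantity `V̂3` collapses to `5 e2 - 10`, and with also
`n1 = 1/4`, `e1 = 2` the quantity `V̂2` becomes `4 - 3 e2 / 2 - k1² / 16 - k1 / 2`; substituting
`k1 = (√401 - 1)/5` and `e2 = (619 - 19√401)/300`, the only nonlinear term is `(√401)² = 401`.
-/

open Real

theorem Z1_one_one_eq_zero {k1 n1 e1 p1 s1 w1 h1 : ℝ}
    (hS1 : k1 * (1 - n1) - e1 - w1 = 0) (hS2 : e1 * p1 - s1 - h1 = 0) :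
    Z1 k1 n1 e1 p1 s1 w1 h1 (1, 1) = (0, 0) := by
  simp only [Z1, one_mul, mul_one, hS1, hS2]

theorem Z2_one_one_eq_zero {k2 n2 e2 p2 s2 w2 h2 : ℝ}
    (hS3 : k2 * (1 - n2) - e2 - w2 = 0) (hS4 : e2 * p2 - s2 - h2 = 0) :
    Z2 k2 n2 e2 p2 s2 w2 h2 (1, 1) = (0, 0) := by
  simp only [Z2, one_mul, mul_one, hS3, hS4]

/-- The centre quantity `V̂2`. -/
def centerV2 (k1 n1 e1 k2 n2 e2 : ℝ) : ℝ :=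
  4 * (e2 + k2 * n2 - k2) * k2 * n2 - (k1 * n1 + e1) * k1 * n1 + (k2 - e2) * k2

/-- The centre quantity `V̂3`. -/
def centerV3 (k2 n2 e2 : ℝ) : ℝ :=
  k2 ^ 3 * (2 * n2 - 1) ^ 3 + e2 * k2 ^ 2 * (4 * n2 - 1) * (2 * n2 - 1)
    + k2 * (2 * n2 - 1) + 2 * e2

theorem centerV2_quarter_two_fiveHalves_tenth (k1 e2 : ℝ) :
    centerV2 k1 (1 / 4) 2 (5 / 2) (1 / 10) e2 = 4 - 3 * e2 / 2 - k1 ^ 2 / 16 - k1 / 2 := by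
  unfold centerV2
  ring

theorem centerV3_fiveHalves_tenth (e2 : ℝ) : centerV3 (5 / 2) (1 / 10) e2 = 5 * e2 - 10 := by
  unfold centerV3
  ring

theorem centerV2_sqrt401_eq_zero :
    centerV2 ((√401 - 1) / 5) (1 / 4) 2 (5 / 2) (1 / 10) ((619 - 19 * √401) / 300) = 0 := by
  rw [centerV2_quarter_two_fiveHalves_tenth]
  linear_combination (-1 / 400 : ℝ) * sq_sqrt (show (0 : ℝ) ≤ 401 by norm_num)

theorem centerV3_sqrt401 :
    centerV3 (5 / 2) (1 / 10) ((619 - 19 * √401) / 300) = 19 * (1 - √401) / 60 := by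
  rw [centerV3_fiveHalves_tenth]
  ring

theorem centerV3_sqrt401_ne_zero :
    centerV3 (5 / 2) (1 / 10) ((619 - 19 * √401) / 300) ≠ 0 := by
  have h : 1 < √401 := lt_sqrt_of_sq_lt (by norm_num)
  rw [centerV3_sqrt401]
  linarith

/-- Under conditions `S`, the point `(1,1)` on the separation line `Σ = {x = 1}` is an
equilibrium of both `Z1` and `Z2`; moreover, for the specific parameter values
`k1 = (√401 − 1)/5`, `n1 = 1/4`, `e1 = 2`, `k2 = 5/2`, `n2 = 1/10`,
`e2 = (619 − 19√401)/300`, one has `V̂2 = 0` and `V̂3 = 19(1 − √401)/60 ≠ 0`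
(the identities underlying Corollary 3.2). -/
theorem stmt19 (k1 n1 e1 p1 s1 w1 h1 k2 n2 e2 p2 s2 w2 h2 : ℝ)
    (hS1 : k1 * (1 - n1) - e1 - w1 = 0)
    (hS2 : e1 * p1 - s1 - h1 = 0)
    (hS3 : k2 * (1 - n2) - e2 - w2 = 0)
    (hS4 : e2 * p2 - s2 - h2 = 0)
    (hk1 : k1 = (Real.sqrt 401 - 1) / 5)
    (hn1 : n1 = 1 / 4)
    (he1 : e1 = 2)
    (hk2 : k2 = 5 / 2)
    (hn2 : n2 = 1 / 10)
    (he2 : e2 = (619 - 19 * Real.sqrt 401) / 300) :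
    Z1 k1 n1 e1 p1 s1 w1 h1 (1, 1) = (0, 0) ∧
    Z2 k2 n2 e2 p2 s2 w2 h2 (1, 1) = (0, 0) ∧
    4 * (e2 + k2 * n2 - k2) * k2 * n2 - (k1 * n1 + e1) * k1 * n1
      + (k2 - e2) * k2 = 0 ∧
    k2 ^ 3 * (2 * n2 - 1) ^ 3 + e2 * k2 ^ 2 * (4 * n2 - 1) * (2 * n2 - 1)
      + k2 * (2 * n2 - 1) + 2 * e2 = 19 * (1 - Real.sqrt 401) / 60 ∧
    k2 ^ 3 * (2 * n2 - 1) ^ 3 + e2 * k2 ^ 2 * (4 * n2 - 1) * (2 * n2 - 1)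
      + k2 * (2 * n2 - 1) + 2 * e2 ≠ 0 := by
  refine ⟨Z1_one_one_eq_zero hS1 hS2, Z2_one_one_eq_zero hS3 hS4, ?_⟩
  subst hk1 hn1 he1 hk2 hn2 he2
  exact ⟨centerV2_sqrt401_eq_zero, centerV3_sqrt401, centerV3_sqrt401_ne_zero⟩
end
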